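/- arXiv:1605.03569 — 2 statements merged into one kernel-verified Lean document; each statement's English description precedes it below -/
import Mathlib

section
/- There exists a cyber-security model for which no optimal security system exists. Specifically, let T be the rooted tree with root r, vertices u₁,u₂,u₃, edges e₁=(r,u₁), e₂=(r,u₂), e₃=(u₁,u₃), and let C = P = {1,2,3}. Then no security system (T,c,p) for M = (T,C,P) is optimal. -/
open Classical in
/-- `maxp n par c p B`: the maximum total prize of a system attack (a rooted
subtree, encoded as a parent-closed set `A` of non-root vertices of the rooted
tree on `Fin (n+1)` with root `0` and parent function `par`; the edge with head
`v` has cost `c v` and the vertex `v` has prize `p v`) whose total edge-cost is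
at most the budget `B`. -/
noncomputable def maxp (n : ℕ) (par : Fin (n+1) → Fin (n+1))
    (c p : Fin (n+1) → ℚ) (B : ℚ) : ℚ :=
  WithBot.unbotD 0 ((((Finset.univ.filter (fun v : Fin (n+1) => v ≠ 0)).powerset).filter
      (fun A => (∀ v ∈ A, par v = 0 ∨ par v ∈ A) ∧ ∑ v ∈ A, c v ≤ B)).image
    (fun A => ∑ v ∈ A, p v)).max

/-- The multiset of values of `f` over the non-root vertices. -/
def valsNR (n : ℕ) (f : Fin (n+1) → ℚ) : Multiset ℚ :=
  (Finset.univ.filter (fun v : Fin (n+1) => v ≠ 0)).val.map f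

/-- The rooted tree with root `r = 0`, vertices `u₁,u₂,u₃` and edges
`(r,u₁)`, `(r,u₂)`, `(u₁,u₃)`. -/
def par3 : Fin 4 → Fin 4 := ![0, 0, 0, 1]

/-!
Optimality means minimising the attacker's best prize at every budget. Compare with the system
`W₁` with costs `(3,2,1)` and prizes `(2,1,3)` on `(u₁,u₂,u₃)`, which keeps the attacker at
`B - 1` for budgets `1 ≤ B ≤ 3`, and with `W₂` with costs `(2,3,1)` and prizes `(1,3,2)`, which
keeps it at `3` for budget `4`. A system matching both must put cost `1` on the leaf edge `e₃`,
since otherwise a budget of `1` already wins a prize. If `e₂` costs `2`, budget `2` forces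
`p(u₂) = 1`, and then the attack `{u₁,u₃}` of cost `4` wins `5 > 3`. If `e₂` costs `3`, the
attack `{u₁,u₃}` costs `3` and wins at least `3 > 2`.
-/

section Attacks

variable {n : ℕ} {par : Fin (n+1) → Fin (n+1)} {c p : Fin (n+1) → ℚ} {B : ℚ}

theorem sum_le_maxp {A : Finset (Fin (n+1))} (h0 : 0 ∉ A)
    (hcl : ∀ v ∈ A, par v = 0 ∨ par v ∈ A) (hc : ∑ v ∈ A, c v ≤ B) :
    ∑ v ∈ A, p v ≤ maxp n par c p B := by
  refine WithBot.le_unbotD (Finset.le_max (Finset.mem_image_of_mem _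
    (Finset.mem_filter.2 ⟨?_, hcl, hc⟩)))
  exact Finset.mem_powerset.2 fun v hv =>
    Finset.mem_filter.2 ⟨Finset.mem_univ v, ne_of_mem_of_not_mem hv h0⟩

theorem maxp_le {q : ℚ} (hq : 0 ≤ q)
    (h : ∀ A : Finset (Fin (n+1)), 0 ∉ A → (∀ v ∈ A, par v = 0 ∨ par v ∈ A) →
      ∑ v ∈ A, c v ≤ B → ∑ v ∈ A, p v ≤ q) :
    maxp n par c p B ≤ q := by
  rw [maxp, WithBot.unbotD_le_iff fun _ => hq]
  refine Finset.max_le fun x hx => ?_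
  obtain ⟨A, hA, rfl⟩ := Finset.mem_image.1 hx
  obtain ⟨hA0, hcl, hc⟩ := Finset.mem_filter.1 hA
  refine WithBot.coe_le_coe.2 (h A (fun h0 => ?_) hcl hc)
  simpa using Finset.mem_powerset.1 hA0 h0

theorem mem_valsNR {f : Fin (n+1) → ℚ} {x : ℚ} : x ∈ valsNR n f ↔ ∃ v ≠ 0, f v = x := by
  simp [valsNR]

end Attacks

theorem par3_attack_cases {A : Finset (Fin 4)} (h0 : 0 ∉ A)
    (hcl : ∀ v ∈ A, par3 v = 0 ∨ par3 v ∈ A) :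
    A = ∅ ∨ A = {1} ∨ A = {2} ∨ A = {1, 2} ∨ A = {1, 3} ∨ A = {1, 2, 3} := by
  revert A
  decide

-- Entry `0` of `![…]` sits at the root, where it is never read.
theorem maxp_par3_costs321_prizes213_le {B : ℚ} (h1 : 1 ≤ B) (h3 : B ≤ 3) :
    maxp 3 par3 ![0, 3, 2, 1] ![0, 2, 1, 3] B ≤ B - 1 :=
  maxp_le (by linarith) fun A h0 hcl hc => by
    rcases par3_attack_cases h0 hcl with rfl | rfl | rfl | rfl | rfl | rfl <;>
      simp at hc ⊢ <;> linarith

theorem maxp_par3_costs231_prizes132_le_four :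
    maxp 3 par3 ![0, 2, 3, 1] ![0, 1, 3, 2] 4 ≤ 3 :=
  maxp_le (by norm_num) fun A h0 hcl hc => by
    rcases par3_attack_cases h0 hcl with rfl | rfl | rfl | rfl | rfl | rfl <;>
      simp at hc ⊢ <;> linarith

section Par3

variable {c p : Fin 4 → ℚ} {B : ℚ}

theorem le_maxp_par3_of_cost_one_le (h : c 1 ≤ B) : p 1 ≤ maxp 3 par3 c p B := by
  simpa using sum_le_maxp (A := {1}) (p := p) (by decide) (by decide) (by simpa using h)

theorem le_maxp_par3_of_cost_two_le (h : c 2 ≤ B) : p 2 ≤ maxp 3 par3 c p B := by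
  simpa using sum_le_maxp (A := {2}) (p := p) (by decide) (by decide) (by simpa using h)

theorem le_maxp_par3_of_cost_one_add_three_le (h : c 1 + c 3 ≤ B) :
    p 1 + p 3 ≤ maxp 3 par3 c p B := by
  simpa using sum_le_maxp (A := {1, 3}) (p := p) (by decide) (by decide) (by simpa using h)

end Par3

section Values

variable {f : Fin 4 → ℚ}

theorem valsNR_three (f : Fin 4 → ℚ) : valsNR 3 f = {f 1, f 2, f 3} := rfl

theorem sum_eq_six_of_valsNR_eq (h : valsNR 3 f = {1, 2, 3}) : f 1 + f 2 + f 3 = 6 := by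
  have hsum := congrArg Multiset.sum h
  simp only [valsNR_three, Multiset.insert_eq_cons, Multiset.sum_cons,
    Multiset.sum_singleton] at hsum
  linarith

theorem eq_one_or_two_or_three_of_valsNR_eq (h : valsNR 3 f = {1, 2, 3}) {v : Fin 4}
    (hv : v ≠ 0) : f v = 1 ∨ f v = 2 ∨ f v = 3 := by
  have hmem : f v ∈ valsNR 3 f := mem_valsNR.2 ⟨v, hv, rfl⟩
  rw [h] at hmem
  simpa using hmem

end Values

theorem false_of_maxp_par3_le {c p : Fin 4 → ℚ} (hc : valsNR 3 c = {1, 2, 3})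
    (hp : valsNR 3 p = {1, 2, 3}) (h1 : maxp 3 par3 c p 1 ≤ 0) (h2 : maxp 3 par3 c p 2 ≤ 1)
    (h3 : maxp 3 par3 c p 3 ≤ 2) (h4 : maxp 3 par3 c p 4 ≤ 3) : False := by
  have hp_ge (v : Fin 4) (hv : v ≠ 0) : 1 ≤ p v := by
    rcases eq_one_or_two_or_three_of_valsNR_eq hp hv with h | h | h <;> rw [h] <;> norm_num
  have hp_le (v : Fin 4) (hv : v ≠ 0) : p v ≤ 3 := by
    rcases eq_one_or_two_or_three_of_valsNR_eq hp hv with h | h | h <;> rw [h] <;> norm_num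
  have hpsum := sum_eq_six_of_valsNR_eq hp
  have hcsum := sum_eq_six_of_valsNR_eq hc
  have hc1_ne_one : c 1 ≠ 1 := fun h =>
    by linarith [le_maxp_par3_of_cost_one_le (p := p) h.le, hp_ge 1 (by decide)]
  have hc2_ne_one : c 2 ≠ 1 := fun h =>
    by linarith [le_maxp_par3_of_cost_two_le (p := p) h.le, hp_ge 2 (by decide)]
  have hc3 : c 3 = 1 := by
    obtain ⟨v, hv, hcv⟩ := mem_valsNR.1 (by rw [hc]; simp : (1 : ℚ) ∈ valsNR 3 c)
    fin_cases v
    · exact absurd rfl hv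
    · exact absurd hcv hc1_ne_one
    · exact absurd hcv hc2_ne_one
    · exact hcv
  rcases eq_one_or_two_or_three_of_valsNR_eq hc (v := 2) (by decide) with hc2 | hc2 | hc2
  · exact hc2_ne_one hc2
  · have hp2 := le_maxp_par3_of_cost_two_le (p := p) (B := 2) hc2.le
    have hp13 := le_maxp_par3_of_cost_one_add_three_le (p := p) (B := 4) (by linarith)
    linarith
  · have hp13 := le_maxp_par3_of_cost_one_add_three_le (p := p) (B := 3) (by linarith)
    linarith [hp_le 2 (by decide)]

/-- With cost multiset `C = {1,2,3}` and prize multiset `P = {1,2,3}`, no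
security system on this tree is optimal. -/
theorem stmt3 :
    ¬ ∃ c p : Fin 4 → ℚ,
      valsNR 3 c = ({1,2,3} : Multiset ℚ) ∧
      valsNR 3 p = ({1,2,3} : Multiset ℚ) ∧
      (∀ B : ℚ, 0 ≤ B → ∀ c' p' : Fin 4 → ℚ,
        valsNR 3 c' = ({1,2,3} : Multiset ℚ) →
        valsNR 3 p' = ({1,2,3} : Multiset ℚ) →
        maxp 3 par3 c p B ≤ maxp 3 par3 c' p' B) := by
  rintro ⟨c, p, hc, hp, hopt⟩
  have hW₁ (B : ℚ) (h1 : 1 ≤ B) (h3 : B ≤ 3) : maxp 3 par3 c p B ≤ B - 1 :=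
    (hopt B (by linarith) _ _ (by decide) (by decide)).trans
      (maxp_par3_costs321_prizes213_le h1 h3)
  have hW₂ : maxp 3 par3 c p 4 ≤ 3 :=
    (hopt 4 (by norm_num) _ _ (by decide) (by decide)).trans
      maxp_par3_costs231_prizes132_le_four
  refine false_of_maxp_par3_le hc hp ?_ ?_ ?_ hW₂
  · linarith [hW₁ 1 le_rfl (by norm_num)]
  · linarith [hW₁ 2 (by norm_num) (by norm_num)]
  · linarith [hW₁ 3 (by norm_num) le_rfl]
end

section
/- Let T be a rooted 3-caterpillar: root r with children u₁,…,u_k (k ≥ 2), and additional leaves u_{k+1},…,uₙ all attached to u₁. Let P = {p₁ ≤ p₂ ≤ ⋯ ≤ pₙ} be a multiset of prizes. Then in the P-model M = (T, I, P), the security system assigning p(uᵢ) = pᵢ for all i (smallest prize on u₁, next smallest on the remaining level-one vertices, largest prizes on the leaves under u₁) is optimal: for every integer budget m and every bijective prize assignment p', maxp(m,𝟙,p) ≤ maxp(m,𝟙,p'). -/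
/-- Parent function of the rooted 3-caterpillar: the root `0` has children
`u₁, …, uₖ`, and `u_{k+1}, …, uₙ` are leaves attached to `u₁`. -/
def catPar (n k : ℕ) : Fin (n+1) → Fin (n+1) :=
  fun v => if v.val ≤ k then 0 else 1

/-!
Since `p'` rearranges `p` on the non-root vertices, `p' ∘ σ = p` there for a permutation `σ` fixing
the root, and an attack `A` is answered by `σ(W)` for a set `W` of the same size as `A` and of at
least its `p`-weight. If `u₁ ∈ A`, take for `W` the set `A` with `u₁` exchanged for `σ⁻¹ u₁`: this
does not lower the weight because `p u₁` is the smallest prize, and `σ(W) ∋ u₁` is a subtree.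
Otherwise `A` lies on level one; `W` keeps the part of `A` inside `σ⁻¹(level one)` and replaces the
rest by leaves in `σ⁻¹(level one)`, whose prizes exceed every level-one prize, so `σ(W)` again lies
on level one.
-/

open Finset

section Exchange

variable {ι β : Type*} [AddCommMonoid β] [LinearOrder β] [IsOrderedAddMonoid β]

theorem Finset.sum_le_sum_of_card_eq_of_forall_le {s t : Finset ι} {f g : ι → β}
    (hst : #s = #t) (h : ∀ a ∈ s, ∀ b ∈ t, f a ≤ g b) :
    ∑ a ∈ s, f a ≤ ∑ b ∈ t, g b := by
  obtain rfl | ht := t.eq_empty_or_nonempty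
  · simp_all
  obtain ⟨b₀, hb₀, hmin⟩ := t.exists_min_image g ht
  calc ∑ a ∈ s, f a ≤ #s • g b₀ := sum_le_card_nsmul _ _ _ fun a ha => h a ha b₀ hb₀
    _ = #t • g b₀ := by rw [hst]
    _ ≤ ∑ b ∈ t, g b := card_nsmul_le_sum _ _ _ hmin

variable [DecidableEq ι]

theorem Finset.exists_mem_card_eq_sum_le_of_le {A : Finset ι} {f : ι → β} {a w : ι}
    (ha : a ∈ A) (h : f a ≤ f w) :
    ∃ W ⊆ insert w A, w ∈ W ∧ #W = #A ∧ ∑ x ∈ A, f x ≤ ∑ x ∈ W, f x := by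
  by_cases hw : w ∈ A
  · exact ⟨A, subset_insert _ _, hw, rfl, le_rfl⟩
  have hwA : w ∉ A.erase a := fun hw' => hw (mem_of_mem_erase hw')
  refine ⟨insert w (A.erase a), insert_subset_insert _ (erase_subset _ _), mem_insert_self _ _,
    by rw [card_insert_of_notMem hwA, card_erase_add_one ha], ?_⟩
  rw [sum_insert hwA, ← add_sum_erase A f ha]
  exact add_le_add h le_rfl

theorem Finset.exists_subset_card_eq_sum_le {A L J : Finset ι} {f : ι → β}
    (hAL : A ⊆ L) (hLJ : #L = #J) (h : ∀ a ∈ L, ∀ x ∈ J \ L, f a ≤ f x) :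
    ∃ W ⊆ J, #W = #A ∧ ∑ x ∈ A, f x ≤ ∑ x ∈ W, f x := by
  have hcard : #(A \ J) ≤ #(J \ L) :=
    (card_le_card (sdiff_subset_sdiff hAL le_rfl)).trans (card_sdiff_eq_card_sdiff_iff.mpr hLJ).le
  obtain ⟨X, hXJL, hX⟩ := exists_subset_card_eq hcard
  have hdisj : Disjoint (A ∩ J) X := disjoint_left.mpr fun x hx hxX =>
    (mem_sdiff.mp (hXJL hxX)).2 (hAL (mem_inter.mp hx).1)
  refine ⟨A ∩ J ∪ X, union_subset inter_subset_right (hXJL.trans sdiff_subset), ?_, ?_⟩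
  · rw [card_union_of_disjoint hdisj, hX, card_inter_add_card_sdiff]
  · rw [sum_union hdisj, ← sum_inter_add_sum_sdiff A J]
    exact add_le_add le_rfl (sum_le_sum_of_card_eq_of_forall_le hX.symm
      fun a ha x hx => h a (hAL (mem_sdiff.mp ha).1) x (hXJL hx))

end Exchange

theorem Fintype.exists_equiv_apply_eq_of_map_univ_eq {α γ : Type*} [Fintype α] [DecidableEq γ]
    {f g : α → γ} (h : univ.val.map f = univ.val.map g) : ∃ e : α ≃ α, ∀ x, g (e x) = f x := by
  classical
  have hfib : ∀ c, Fintype.card {a // f a = c} = Fintype.card {a // g a = c} := fun c => by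
    simpa [Fintype.card_subtype, Multiset.count_map, card_def, filter_val, eq_comm (b := c)] using
      congrArg (Multiset.count c) h
  exact ⟨Equiv.ofFiberEquiv fun c => Fintype.equivOfCardEq (hfib c), Equiv.ofFiberEquiv_map _⟩

theorem Equiv.Perm.symm_apply_ne_zero {α : Type*} [Zero α] {σ : Equiv.Perm α} (hσ : σ 0 = 0)
    {v : α} (hv : v ≠ 0) : σ.symm v ≠ 0 :=
  σ.symm_apply_eq.not.mpr (by rwa [hσ])

section PModel

variable {n : ℕ}

def IsParentClosed (par : Fin (n+1) → Fin (n+1)) (A : Finset (Fin (n+1))) : Prop :=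
  ∀ v ∈ A, par v = 0 ∨ par v ∈ A

def IsAttack (par : Fin (n+1) → Fin (n+1)) (c : Fin (n+1) → ℚ) (B : ℚ)
    (A : Finset (Fin (n+1))) : Prop :=
  (∀ v ∈ A, v ≠ 0) ∧ IsParentClosed par A ∧ ∑ v ∈ A, c v ≤ B

theorem maxp_le_maxp_of_forall_isAttack {par : Fin (n+1) → Fin (n+1)} {c p p' : Fin (n+1) → ℚ}
    {B : ℚ} (h : ∀ A, IsAttack par c B A →
      ∃ A', IsAttack par c B A' ∧ ∑ v ∈ A, p v ≤ ∑ v ∈ A', p' v) :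
    maxp n par c p B ≤ maxp n par c p' B := by
  classical
  unfold maxp
  simp only [Finset.max, sup_image]
  set F := ((univ.filter fun v : Fin (n+1) => v ≠ 0).powerset).filter
    fun A => (∀ v ∈ A, par v = 0 ∨ par v ∈ A) ∧ ∑ v ∈ A, c v ≤ B
  have hF : ∀ A, A ∈ F ↔ IsAttack par c B A := fun A => by
    simp [F, IsAttack, IsParentClosed, subset_iff]
  obtain hFe | hFne := F.eq_empty_or_nonempty
  · simp [hFe]
  rw [← coe_sup' hFne, ← coe_sup' hFne, WithBot.unbotD_coe, WithBot.unbotD_coe]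
  refine sup'_le _ _ fun A hA => ?_
  obtain ⟨A', hA', hle⟩ := h A ((hF A).mp hA)
  exact le_sup'_of_le _ ((hF A').mpr hA') hle

theorem exists_perm_of_valsNR_eq {p p' : Fin (n+1) → ℚ} (h : valsNR n p' = valsNR n p) :
    ∃ σ : Equiv.Perm (Fin (n+1)), σ 0 = 0 ∧ ∀ v, v ≠ 0 → p' (σ v) = p v := by
  have hmap : univ.val.map (Subtype.restrict (· ≠ 0) p) =
      univ.val.map (Subtype.restrict (· ≠ 0) p') := by
    simpa only [univ_val_map_subtype_restrict, valsNR] using h.symm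
  obtain ⟨e, he⟩ := Fintype.exists_equiv_apply_eq_of_map_univ_eq hmap
  refine ⟨Equiv.Perm.ofSubtype e, Equiv.Perm.ofSubtype_apply_of_not_mem e (not_not.mpr rfl),
    fun v hv => ?_⟩
  rw [Equiv.Perm.ofSubtype_apply_of_mem e hv]
  exact he ⟨v, hv⟩

end PModel

section Caterpillar

variable {n k : ℕ} {A : Finset (Fin (n+1))}

theorem isParentClosed_catPar_of_one_mem (h1 : 1 ∈ A) : IsParentClosed (catPar n k) A := by
  intro v _
  unfold catPar
  split_ifs
  exacts [Or.inl rfl, Or.inr h1]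

theorem isParentClosed_catPar_of_forall_val_le (h : ∀ v ∈ A, v.val ≤ k) :
    IsParentClosed (catPar n k) A :=
  fun v hv => Or.inl (if_pos (h v hv))

theorem val_le_of_isParentClosed_catPar (hA : IsParentClosed (catPar n k) A) (h1 : 1 ∉ A) :
    ∀ v ∈ A, v.val ≤ k := by
  intro v hv
  by_contra hvk
  have hpar : catPar n k v = 1 := if_neg hvk
  rcases hA v hv with h0 | h1'
  · have : n = 0 := by simpa [hpar] using h0
    subst this
    exact hvk (by omega)
  · exact h1 (hpar ▸ h1')

variable {p : Fin (n+1) → ℚ} {σ : Equiv.Perm (Fin (n+1))}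

theorem exists_catPar_exchange_of_one_mem
    (hsort : ∀ v w : Fin (n+1), v ≠ 0 → v ≤ w → p v ≤ p w) (hσ : σ 0 = 0)
    (hA0 : ∀ v ∈ A, v ≠ 0) (h1 : 1 ∈ A) :
    ∃ W : Finset (Fin (n+1)), (∀ v ∈ W, v ≠ 0) ∧
      IsParentClosed (catPar n k) (W.map σ.toEmbedding) ∧ #W = #A ∧
      ∑ v ∈ A, p v ≤ ∑ v ∈ W, p v := by
  have hw0 : σ.symm 1 ≠ 0 := σ.symm_apply_ne_zero hσ (hA0 1 h1)
  obtain ⟨W, hWA, hwW, hWcard, hWsum⟩ :=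
    exists_mem_card_eq_sum_le_of_le h1 (hsort 1 _ (hA0 1 h1) (Fin.one_le_of_ne_zero hw0))
  refine ⟨W, fun v hv => ?_, isParentClosed_catPar_of_one_mem ?_, hWcard, hWsum⟩
  · rcases mem_insert.mp (hWA hv) with rfl | hv
    exacts [hw0, hA0 v hv]
  · simpa using mem_map_of_mem σ.toEmbedding hwW

theorem exists_catPar_exchange_of_one_notMem
    (hsort : ∀ v w : Fin (n+1), v ≠ 0 → v ≤ w → p v ≤ p w) (hσ : σ 0 = 0)
    (hA0 : ∀ v ∈ A, v ≠ 0) (hA : IsParentClosed (catPar n k) A) (h1 : 1 ∉ A) :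
    ∃ W : Finset (Fin (n+1)), (∀ v ∈ W, v ≠ 0) ∧
      IsParentClosed (catPar n k) (W.map σ.toEmbedding) ∧ #W = #A ∧
      ∑ v ∈ A, p v ≤ ∑ v ∈ W, p v := by
  set L := univ.filter fun v : Fin (n+1) => v ≠ 0 ∧ v.val ≤ k
  have hAL : A ⊆ L := fun v hv => by
    simpa [L, hA0 v hv] using val_le_of_isParentClosed_catPar hA h1 v hv
  obtain ⟨W, hWJ, hWcard, hWsum⟩ := exists_subset_card_eq_sum_le (f := p) hAL
    (card_map σ.symm.toEmbedding).symm fun a ha x hx => by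
      simp only [L, mem_sdiff, mem_map, mem_filter, mem_univ, true_and] at ha hx
      obtain ⟨⟨y, ⟨hy0, -⟩, rfl⟩, hxL⟩ := hx
      have hx0 : σ.symm.toEmbedding y ≠ 0 := σ.symm_apply_ne_zero hσ hy0
      exact hsort a _ ha.1 (Fin.le_iff_val_le_val.mpr (by grind))
  refine ⟨W, fun v hv => ?_, isParentClosed_catPar_of_forall_val_le fun v hv => ?_, hWcard, hWsum⟩
  · obtain ⟨y, hy, rfl⟩ := mem_map.mp (hWJ hv)
    exact σ.symm_apply_ne_zero hσ (mem_filter.mp hy).2.1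
  · obtain ⟨u, hu, rfl⟩ := mem_map.mp hv
    obtain ⟨y, hy, rfl⟩ := mem_map.mp (hWJ hu)
    simpa using (mem_filter.mp hy).2.2

theorem exists_isParentClosed_catPar_card_eq_sum_le {p' : Fin (n+1) → ℚ}
    (hsort : ∀ v w : Fin (n+1), v ≠ 0 → v ≤ w → p v ≤ p w) (hp' : valsNR n p' = valsNR n p)
    (hA0 : ∀ v ∈ A, v ≠ 0) (hA : IsParentClosed (catPar n k) A) :
    ∃ A' : Finset (Fin (n+1)), (∀ v ∈ A', v ≠ 0) ∧ IsParentClosed (catPar n k) A' ∧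
      #A' = #A ∧ ∑ v ∈ A, p v ≤ ∑ v ∈ A', p' v := by
  obtain ⟨σ, hσ, hpσ⟩ := exists_perm_of_valsNR_eq hp'
  obtain ⟨W, hW0, hWc, hWcard, hWsum⟩ := (em ((1 : Fin (n+1)) ∈ A)).elim
    (exists_catPar_exchange_of_one_mem (k := k) hsort hσ hA0)
    (exists_catPar_exchange_of_one_notMem hsort hσ hA0 hA)
  refine ⟨W.map σ.toEmbedding, fun v hv => ?_, hWc, by rwa [card_map], ?_⟩
  · obtain ⟨u, hu, rfl⟩ := mem_map.mp hv
    exact hσ ▸ σ.injective.ne (hW0 u hu)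
  · rw [sum_map]
    exact hWsum.trans_eq (sum_congr rfl fun v hv => (hpσ v (hW0 v hv)).symm)

end Caterpillar

theorem stmt13_general (n k : ℕ)
    (p : Fin (n+1) → ℚ)
    (hsort : ∀ v w : Fin (n+1), v ≠ 0 → v ≤ w → p v ≤ p w)
    (m : ℕ) (p' : Fin (n+1) → ℚ) (hp' : valsNR n p' = valsNR n p) :
    maxp n (catPar n k) (fun _ => 1) p m ≤ maxp n (catPar n k) (fun _ => 1) p' m := by
  refine maxp_le_maxp_of_forall_isAttack fun A ⟨hA0, hA, hcost⟩ => ?_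
  obtain ⟨A', hA'0, hA', hcard, hsum⟩ :=
    exists_isParentClosed_catPar_card_eq_sum_le hsort hp' hA0 hA
  exact ⟨A', ⟨hA'0, hA', by simpa [hcard] using hcost⟩, hsum⟩

/-- On a rooted 3-caterpillar, assigning the prizes in increasing order of the
index (smallest prizes on level one, largest on the leaves under `u₁`) is an
optimal security system for the P-model. -/
theorem stmt13 (n k : ℕ) (hk2 : 2 ≤ k) (hkn : k + 1 ≤ n)
    (p : Fin (n+1) → ℚ) (hp : ∀ v, 0 ≤ p v)
    (hsort : ∀ v w : Fin (n+1), v ≠ 0 → v ≤ w → p v ≤ p w)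
    (m : ℕ) (p' : Fin (n+1) → ℚ) (hp' : valsNR n p' = valsNR n p) :
    maxp n (catPar n k) (fun _ => 1) p m ≤ maxp n (catPar n k) (fun _ => 1) p' m :=
  stmt13_general n k p hsort m p' hp'
end
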